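/- arXiv:math/0303058 — 3 statements merged into one kernel-verified Lean document; each statement's English description precedes it below -/
import Mathlib

section
/- For every s ∈ M there exists a unique s^L ∈ M with s^L · s = e (namely the unique element of M ∩ G s⁻¹), and for all u ∈ G one has (s ⊳ u)^L = s^L ⊳ (s ▷ u); equivalently (s^L ⊳ (s ▷ u)) · (s ⊳ u) = e. -/
/-- For every `s ∈ M` there is a unique left inverse `s^L ∈ M` with
`s^L · s = e` (it is the unique element of `M ∩ G s⁻¹`), and for all `u ∈ G`
one has `(s^L ⊳ (s ▷ u)) · (s ⊳ u) = e`, i.e. `(s ⊳ u)^L = s^L ⊳ (s ▷ u)`. -/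
theorem stmt6 {X : Type*} [Group X] [Fintype X] (G : Subgroup X) (M : Set X)
    (hM1 : (1 : X) ∈ M)
    (huniq : ∀ u v s t : X, u ∈ G → v ∈ G → s ∈ M → t ∈ M → u * s = v * t → u = v ∧ s = t)
    (tr ta : X → X → X)
    (htr : ∀ s u : X, s ∈ M → u ∈ G → tr s u ∈ G)
    (hta : ∀ s u : X, s ∈ M → u ∈ G → ta s u ∈ M)
    (hfac : ∀ s u : X, s ∈ M → u ∈ G → s * u = tr s u * ta s u)
    (tau mdot : X → X → X)
    (htau : ∀ s t : X, s ∈ M → t ∈ M → tau s t ∈ G)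
    (hmdot : ∀ s t : X, s ∈ M → t ∈ M → mdot s t ∈ M)
    (hfac2 : ∀ s t : X, s ∈ M → t ∈ M → s * t = tau s t * mdot s t) :
    ∀ s ∈ M,
      (∃! sL : X, sL ∈ M ∧ mdot sL s = 1) ∧
      (∀ sL : X, sL ∈ M → mdot sL s = 1 → sL * s ∈ G) ∧
      (∀ sL : X, sL ∈ M → mdot sL s = 1 →
        ∀ u ∈ G, mdot (ta sL (tr s u)) (ta s u) = 1) := by
  intro s hs
  -- injectivity of m ↦ mdot m s
  have hinj : ∀ m ∈ M, ∀ m' ∈ M, mdot m s = mdot m' s → m = m' := by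
    intro m hm m' hm' h
    have h1 := hfac2 m s hm hs
    have h2 := hfac2 m' s hm' hs
    have key : (tau m s * (tau m' s)⁻¹) * m' * s = 1 * m * s := by
      rw [one_mul, mul_assoc, h2, h1, h]; group
    have key' : (tau m s * (tau m' s)⁻¹) * m' = 1 * m := mul_right_cancel key
    have := huniq _ 1 m' m (mul_mem (htau m s hm hs) (inv_mem (htau m' s hm' hs)))
      (one_mem G) hm' hm key'
    exact this.2.symm
  -- part 2
  have part2 : ∀ sL : X, sL ∈ M → mdot sL s = 1 → sL * s ∈ G := by
    intro sL hsL hmd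
    rw [hfac2 sL s hsL hs, hmd, mul_one]
    exact htau sL s hsL hs
  refine ⟨?_, part2, ?_⟩
  · -- existence via finiteness
    haveI : Finite M := Set.toFinite M
    let f : M → M := fun m => ⟨mdot m s, hmdot m s m.2 hs⟩
    have hfinj : Function.Injective f := by
      intro a b hab
      exact Subtype.ext (hinj a a.2 b b.2 (congrArg Subtype.val hab))
    have hsurj : Function.Surjective f := Finite.surjective_of_injective hfinj
    obtain ⟨⟨sL, hsL⟩, hfsL⟩ := hsurj ⟨1, hM1⟩
    refine ⟨sL, ⟨hsL, congrArg Subtype.val hfsL⟩, ?_⟩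
    intro y ⟨hy, hy1⟩
    have hv : mdot sL s = 1 := congrArg Subtype.val hfsL
    exact hinj y hy sL hsL (by rw [hy1, hv])
  · intro sL hsL hmd u hu
    have hu' : tr s u ∈ G := htr s u hs hu
    have ha : ta sL (tr s u) ∈ M := hta sL _ hsL hu'
    have hb : ta s u ∈ M := hta s u hs hu
    have habG : ta sL (tr s u) * ta s u ∈ G := by
      have e1 : ta sL (tr s u) = (tr sL (tr s u))⁻¹ * (sL * tr s u) := by
        rw [hfac sL _ hsL hu']; group
      have e2 : ta s u = (tr s u)⁻¹ * (s * u) := by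
        rw [hfac s u hs hu]; group
      have : ta sL (tr s u) * ta s u = (tr sL (tr s u))⁻¹ * (sL * s) * u := by
        rw [e1, e2]; group
      rw [this]
      exact mul_mem (mul_mem (inv_mem (htr sL _ hsL hu')) (part2 sL hsL hmd)) hu
    have := huniq (ta sL (tr s u) * ta s u) (tau _ _) 1 (mdot _ _) habG
      (htau _ _ ha hb) hM1 (hmdot _ _ ha hb)
      (by rw [mul_one]; exact hfac2 _ _ ha hb)
    exact this.2.symm
end

section
/- For s ∈ M with left inverse s^L (the unique element of M with s^L · s = e), the map z ↦ s ▷ z restricts to a group isomorphism from stab(s) onto stab(s^L). -/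
/-- For `s ∈ M` with left inverse `s^L` (the unique element of `M` with
`s^L · s = e`), the map `z ↦ s ▷ z` restricts to a group isomorphism from
`stab(s)` onto `stab(s^L)` (a multiplicative bijection between the two
stabilizers). -/
theorem stmt7 {X : Type*} [Group X] [Fintype X] (G : Subgroup X) (M : Set X)
    (hM1 : (1 : X) ∈ M)
    (huniq : ∀ u v s t : X, u ∈ G → v ∈ G → s ∈ M → t ∈ M → u * s = v * t → u = v ∧ s = t)
    (tr ta : X → X → X)
    (htr : ∀ s u : X, s ∈ M → u ∈ G → tr s u ∈ G)
    (hta : ∀ s u : X, s ∈ M → u ∈ G → ta s u ∈ M)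
    (hfac : ∀ s u : X, s ∈ M → u ∈ G → s * u = tr s u * ta s u)
    (tau mdot : X → X → X)
    (htau : ∀ s t : X, s ∈ M → t ∈ M → tau s t ∈ G)
    (hmdot : ∀ s t : X, s ∈ M → t ∈ M → mdot s t ∈ M)
    (hfac2 : ∀ s t : X, s ∈ M → t ∈ M → s * t = tau s t * mdot s t)
    (s sL : X) (hs : s ∈ M) (hsL : sL ∈ M) (hinv : mdot sL s = 1) :
    Set.BijOn (tr s) {z : X | z ∈ G ∧ ta s z = s} {z : X | z ∈ G ∧ ta sL z = sL} ∧
      ∀ z w : X, z ∈ G → ta s z = s → w ∈ G → ta s w = s →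
        tr s (z * w) = tr s z * tr s w := by
  have hc : sL * s = tau sL s := by
    have h := hfac2 sL s hsL hs; rw [hinv, mul_one] at h; exact h
  set c := tau sL s with hcdef
  have hcG : c ∈ G := htau sL s hsL hs
  have key : ∀ u v t : X, u ∈ G → v ∈ G → t ∈ M → s * u = v * t →
      tr s u = v ∧ ta s u = t := by
    intro u v t hu hv ht heq
    exact huniq _ _ _ _ (htr s u hs hu) hv (hta s u hs hu) ht
      (by rw [← hfac s u hs hu, heq])
  have keyL : ∀ u v t : X, u ∈ G → v ∈ G → t ∈ M → sL * u = v * t →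
      tr sL u = v ∧ ta sL u = t := by
    intro u v t hu hv ht heq
    exact huniq _ _ _ _ (htr sL u hsL hu) hv (hta sL u hsL hu) ht
      (by rw [← hfac sL u hsL hu, heq])
  have hs' : s = sL⁻¹ * c := by rw [← hc]; group
  constructor
  · refine ⟨?_, ?_, ?_⟩
    · rintro z ⟨hzG, hzs⟩
      have hsz : s * z = tr s z * s := by rw [hfac s z hs hzG, hzs]
      have h2 : sL * tr s z = (c * z * c⁻¹) * sL := by
        calc sL * tr s z = sL * (s * z * s⁻¹) := by rw [hsz]; group
        _ = c * z * s⁻¹ := by rw [← mul_assoc, ← mul_assoc, hc]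
        _ = (c * z * c⁻¹) * sL := by rw [hs']; group
      have h3 := keyL (tr s z) (c * z * c⁻¹) sL (htr s z hs hzG)
        (G.mul_mem (G.mul_mem hcG hzG) (G.inv_mem hcG)) hsL h2
      exact ⟨htr s z hs hzG, h3.2⟩
    · rintro z ⟨hzG, hzs⟩ w ⟨hwG, hws⟩ heq
      have hsz : s * z = tr s z * s := by rw [hfac s z hs hzG, hzs]
      have hsw : s * w = tr s w * s := by rw [hfac s w hs hwG, hws]
      have : s * z = s * w := by rw [hsz, hsw, heq]
      exact mul_left_cancel this
    · rintro y ⟨hyG, hys⟩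
      have hsLy : sL * y = tr sL y * sL := by rw [hfac sL y hsL hyG, hys]
      set z := s⁻¹ * y * s with hz
      have hzG : z ∈ G := by
        have hzc : z = c⁻¹ * tr sL y * c := by
          rw [hz, hs']
          calc (sL⁻¹ * c)⁻¹ * y * (sL⁻¹ * c)
              = c⁻¹ * (sL * y) * sL⁻¹ * c := by group
          _ = c⁻¹ * (tr sL y * sL) * sL⁻¹ * c := by rw [hsLy]
          _ = c⁻¹ * tr sL y * c := by group
        rw [hzc]
        exact G.mul_mem (G.mul_mem (G.inv_mem hcG) (htr sL y hsL hyG)) hcG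
      have hzeq : s * z = y * s := by rw [hz]; group
      have h4 := key z y s hzG hyG hs hzeq
      exact ⟨z, ⟨hzG, h4.2⟩, h4.1⟩
  · intro z w hzG hzs hwG hws
    have hsz : s * z = tr s z * s := by rw [hfac s z hs hzG, hzs]
    have hsw : s * w = tr s w * s := by rw [hfac s w hs hwG, hws]
    have heq : s * (z * w) = (tr s z * tr s w) * s := by
      rw [← mul_assoc, hsz, mul_assoc, hsw, ← mul_assoc]
    exact (key (z * w) _ s (G.mul_mem hzG hwG)
      (G.mul_mem (htr s z hs hzG) (htr s w hs hwG)) hs heq).1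
end

section
/- Let α : V → W be a grade-preserving G-equivariant linear map between indecomposable objects, where V is supported on an orbit O ⊆ M with each V_s (s ∈ O) an irreducible stab(s)-representation, and similarly W on orbit O'. Then either α = 0, or O = O' and α is a nonzero scalar multiple of an isomorphism which on each graded component V_s is λ times a fixed identification; in particular if V = W then α is a scalar multiple of the identity. -/
/-!
Schur's argument, run one orbit at a time. Since `ρ u` carries `V_s` isomorphically onto
`V_{s ⊳ u}`, irreducibility of the stabilizer representation at one point of an orbit gives it
at every point, and any property of `α` on `V_s` propagates along the orbit. At the base point
`sV` the kernel of `α` on `V_{sV}` is `stab(sV)`-invariant, so `α` either kills `V_{sV}` (and then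
all of `V`) or is injective on it. In the second case `W_{sV} ≠ 0`, so `sV` lies in the orbit of
`W`, and `α(V_{sV})` is a nonzero invariant submodule of the irreducible `W_{sV}`, hence all of it.
Thus `α` restricts to isomorphisms `V_t ≅ W_t` for every `t`, and is an isomorphism of the
internal direct sums.
-/

open LinearMap (ker)

section DirectSum

variable {ι R V W : Type*} [DecidableEq ι] [Ring R] [AddCommGroup V] [Module R V]
  [AddCommGroup W] [Module R W] {A : ι → Submodule R V} {B : ι → Submodule R W} {f : V →ₗ[R] W}

open DirectSum in
theorem DirectSum.IsInternal.bijective_of_disjoint_ker (hA : IsInternal A) (hB : IsInternal B)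
    (hdisj : ∀ i, Disjoint (A i) (ker f)) (hmap : ∀ i, (A i).map f = B i) :
    Function.Bijective f := by
  have hmaps (i : ι) : ∀ x ∈ A i, f x ∈ B i := fun x hx => hmap i ▸ Submodule.mem_map_of_mem hx
  have hcomm : f ∘ₗ coeLinearMap A = coeLinearMap B ∘ₗ lmap fun i => f.restrict (hmaps i) := by
    refine DirectSum.linearMap_ext R fun i => LinearMap.ext fun x => ?_
    simp [lof_eq_of]
  constructor
  · refine Function.Injective.of_comp_right (g := coeLinearMap A) ?_ hA.surjective
    rw [← LinearMap.coe_comp, hcomm, LinearMap.coe_comp]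
    exact hB.injective.comp <| (lmap_injective _).2 fun i =>
      (LinearMap.injective_restrict_iff _).2 (hdisj i)
  · rw [← LinearMap.range_eq_top, LinearMap.range_eq_map, ← hA.submodule_iSup_eq_top,
      Submodule.map_iSup]
    simp_rw [hmap]
    exact hB.submodule_iSup_eq_top

theorem DirectSum.IsInternal.eq_zero_of_forall_le_ker (hA : IsInternal A)
    (h : ∀ i, A i ≤ ker f) : f = 0 :=
  LinearMap.ker_eq_top.1 <| eq_top_iff.2 <| hA.submodule_iSup_eq_top ▸ iSup_le h

end DirectSum

section GradedRep

variable {X : Type*} [Group X] {G : Subgroup X} {M : Set X} {ta : X → X → X} {s u : X}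

/-- `ta s u` is `s ⊳ u`, a right action of `G` on `M`; off `M × G` its values are irrelevant. -/
structure IsRightActionOn (G : Subgroup X) (M : Set X) (ta : X → X → X) : Prop where
  mem : ∀ s u, s ∈ M → u ∈ G → ta s u ∈ M
  one : ∀ s, s ∈ M → ta s 1 = s
  mul : ∀ s u v, s ∈ M → u ∈ G → v ∈ G → ta (ta s u) v = ta s (u * v)

theorem isRightActionOn_of_factorization {tr : X → X → X}
    (huniq : ∀ u v s t : X, u ∈ G → v ∈ G → s ∈ M → t ∈ M → u * s = v * t → u = v ∧ s = t)
    (htr : ∀ s u : X, s ∈ M → u ∈ G → tr s u ∈ G)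
    (hta : ∀ s u : X, s ∈ M → u ∈ G → ta s u ∈ M)
    (hfac : ∀ s u : X, s ∈ M → u ∈ G → s * u = tr s u * ta s u) :
    IsRightActionOn G M ta where
  mem := hta
  one s hs := by
    have h1 := one_mem G
    refine (huniq 1 _ s _ h1 (htr s 1 hs h1) hs (hta s 1 hs h1) ?_).2.symm
    rw [one_mul, ← hfac s 1 hs h1, mul_one]
  mul s u v hs hu hv := by
    have hsu := hta s u hs hu
    -- both sides are the `M`-part of `s u v = (s ▷ u)(s ⊳ u) v`
    refine (huniq _ _ _ _ (htr s (u * v) hs (mul_mem hu hv))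
      (mul_mem (htr s u hs hu) (htr _ v hsu hv)) (hta s _ hs (mul_mem hu hv)) (hta _ v hsu hv)
      ?_).2.symm
    rw [← hfac s _ hs (mul_mem hu hv), ← mul_assoc, hfac s u hs hu, mul_assoc, hfac _ v hsu hv,
      mul_assoc]

def taOrbit (G : Subgroup X) (ta : X → X → X) (s : X) : Set X :=
  {t | ∃ u ∈ G, ta s u = t}

namespace IsRightActionOn

theorem ta_inv (hA : IsRightActionOn G M ta) (hs : s ∈ M) (hu : u ∈ G) :
    ta (ta s u) u⁻¹ = s := by
  rw [hA.mul s u _ hs hu (inv_mem hu), mul_inv_cancel, hA.one s hs]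

theorem taOrbit_ta (hA : IsRightActionOn G M ta) (hs : s ∈ M) (hu : u ∈ G) :
    taOrbit G ta (ta s u) = taOrbit G ta s := by
  ext t
  constructor
  · rintro ⟨v, hv, rfl⟩
    exact ⟨u * v, mul_mem hu hv, (hA.mul s u v hs hu hv).symm⟩
  · rintro ⟨v, hv, rfl⟩
    refine ⟨u⁻¹ * v, mul_mem (inv_mem hu) hv, ?_⟩
    rw [hA.mul _ _ _ hs hu (mul_mem (inv_mem hu) hv), mul_inv_cancel_left]

end IsRightActionOn

variable {R V W : Type*} [Ring R] [AddCommGroup V] [Module R V] [AddCommGroup W] [Module R W]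
  {VS : X → Submodule R V} {WS : X → Submodule R W}
  {ρ ρV : X → V →ₗ[R] V} {ρW : X → W →ₗ[R] W} {α : V →ₗ[R] W}

/-- A right linear `G`-action `ξ ⊲̄ u = ρ u ξ` on `V` compatible with the grading `V_s = VS s`. -/
structure IsGradedRep (G : Subgroup X) (M : Set X) (ta : X → X → X)
    (VS : X → Submodule R V) (ρ : X → V →ₗ[R] V) : Prop where
  map_one : ρ 1 = LinearMap.id
  map_mul : ∀ u v : X, u ∈ G → v ∈ G → ρ (u * v) = (ρ v).comp (ρ u)
  mapsTo : ∀ s u : X, s ∈ M → u ∈ G → ∀ ξ ∈ VS s, ρ u ξ ∈ VS (ta s u)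

def IsStabInvariant (G : Subgroup X) (ta : X → X → X) (ρ : X → V →ₗ[R] V) (s : X)
    (U : Submodule R V) : Prop :=
  ∀ w : X, w ∈ G → ta s w = s → ∀ ξ ∈ U, ρ w ξ ∈ U

def IsIrreducibleAt (G : Subgroup X) (ta : X → X → X) (VS : X → Submodule R V)
    (ρ : X → V →ₗ[R] V) (s : X) : Prop :=
  ∀ U : Submodule R V, U ≤ VS s → IsStabInvariant G ta ρ s U → U = ⊥ ∨ U = VS s

namespace IsGradedRep

theorem comp_inv (hρ : IsGradedRep G M ta VS ρ) (hu : u ∈ G) :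
    (ρ u).comp (ρ u⁻¹) = LinearMap.id := by
  rw [← hρ.map_mul _ _ (inv_mem hu) hu, inv_mul_cancel, hρ.map_one]

theorem apply_inv_apply (hρ : IsGradedRep G M ta VS ρ) (hu : u ∈ G) (ξ : V) :
    ρ u (ρ u⁻¹ ξ) = ξ :=
  LinearMap.congr_fun (hρ.comp_inv hu) ξ

theorem mem_inv (hρ : IsGradedRep G M ta VS ρ) (hA : IsRightActionOn G M ta) (hs : s ∈ M)
    (hu : u ∈ G) {ξ : V} (hξ : ξ ∈ VS (ta s u)) : ρ u⁻¹ ξ ∈ VS s :=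
  hA.ta_inv hs hu ▸ hρ.mapsTo _ _ (hA.mem s u hs hu) (inv_mem hu) ξ hξ

theorem map_eq (hρ : IsGradedRep G M ta VS ρ) (hA : IsRightActionOn G M ta) (hs : s ∈ M)
    (hu : u ∈ G) : (VS s).map (ρ u) = VS (ta s u) :=
  le_antisymm (Submodule.map_le_iff_le_comap.2 (hρ.mapsTo s u hs hu)) fun ξ hξ =>
    ⟨ρ u⁻¹ ξ, hρ.mem_inv hA hs hu hξ, hρ.apply_inv_apply hu ξ⟩

theorem isIrreducibleAt_ta (hρ : IsGradedRep G M ta VS ρ) (hA : IsRightActionOn G M ta)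
    (hs : s ∈ M) (hu : u ∈ G) (hirr : IsIrreducibleAt G ta VS ρ s) :
    IsIrreducibleAt G ta VS ρ (ta s u) := by
  intro U hU hinv
  -- pull `U` back to `V_s`, where `stab(s) = u stab(s ⊳ u) u⁻¹` acts
  have hle : U.map (ρ u⁻¹) ≤ VS s :=
    Submodule.map_le_iff_le_comap.2 fun ξ hξ => hρ.mem_inv hA hs hu (hU hξ)
  have hinv' : IsStabInvariant G ta ρ s (U.map (ρ u⁻¹)) := by
    rintro w hw hws _ ⟨η, hη, rfl⟩
    have hconj : u⁻¹ * w * u ∈ G := mul_mem (mul_mem (inv_mem hu) hw) hu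
    have hstab : ta (ta s u) (u⁻¹ * w * u) = ta s u := by
      rw [hA.mul s u _ hs hu hconj, show u * (u⁻¹ * w * u) = w * u by group,
        ← hA.mul s w u hs hw hu, hws]
    refine ⟨ρ (u⁻¹ * w * u) η, hinv _ hconj hstab η hη, ?_⟩
    rw [← LinearMap.comp_apply, ← hρ.map_mul _ _ hconj (inv_mem hu), ← LinearMap.comp_apply,
      ← hρ.map_mul _ _ (inv_mem hu) hw, show u⁻¹ * w * u * u⁻¹ = u⁻¹ * w by group]
  have hback : (U.map (ρ u⁻¹)).map (ρ u) = U := by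
    rw [← Submodule.map_comp, hρ.comp_inv hu, Submodule.map_id]
  rcases hirr _ hle hinv' with h | h
  · exact Or.inl (by rw [← hback, h, Submodule.map_bot])
  · exact Or.inr (by rw [← hback, h, hρ.map_eq hA hs hu])

end IsGradedRep

def IsEquivariant (G : Subgroup X) (ρV : X → V →ₗ[R] V) (ρW : X → W →ₗ[R] W)
    (α : V →ₗ[R] W) : Prop :=
  ∀ u : X, u ∈ G → α.comp (ρV u) = (ρW u).comp α

theorem map_ta_eq_map_map (hρV : IsGradedRep G M ta VS ρV) (hα : IsEquivariant G ρV ρW α)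
    (hA : IsRightActionOn G M ta) (hs : s ∈ M) (hu : u ∈ G) :
    (VS (ta s u)).map α = ((VS s).map α).map (ρW u) := by
  rw [← hρV.map_eq hA hs hu, ← Submodule.map_comp, hα u hu, Submodule.map_comp]

theorem isStabInvariant_inf_ker (hρV : IsGradedRep G M ta VS ρV) (hα : IsEquivariant G ρV ρW α)
    (hs : s ∈ M) : IsStabInvariant G ta ρV s (VS s ⊓ ker α) := by
  rintro w hw hws ξ ⟨hξ, hξα⟩
  refine ⟨hws ▸ hρV.mapsTo s w hs hw ξ hξ, ?_⟩
  rw [SetLike.mem_coe, LinearMap.mem_ker] at hξα ⊢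
  rw [← LinearMap.comp_apply, hα w hw, LinearMap.comp_apply, hξα, map_zero]

theorem isStabInvariant_map (hρV : IsGradedRep G M ta VS ρV) (hα : IsEquivariant G ρV ρW α)
    (hs : s ∈ M) : IsStabInvariant G ta ρW s ((VS s).map α) := by
  rintro w hw hws _ ⟨ξ, hξ, rfl⟩
  exact ⟨ρV w ξ, hws ▸ hρV.mapsTo s w hs hw ξ hξ, LinearMap.congr_fun (hα w hw) ξ⟩

theorem disjoint_ker_or_le_ker (hρV : IsGradedRep G M ta VS ρV) (hα : IsEquivariant G ρV ρW α)
    (hs : s ∈ M) (hirr : IsIrreducibleAt G ta VS ρV s) :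
    Disjoint (VS s) (ker α) ∨ VS s ≤ ker α :=
  (hirr _ inf_le_left (isStabInvariant_inf_ker hρV hα hs)).imp disjoint_iff.2 inf_eq_left.1

theorem map_ne_bot_of_disjoint_ker {p : Submodule R V} (hdisj : Disjoint p (ker α))
    (hne : p ≠ ⊥) : p.map α ≠ ⊥ :=
  fun h => hne (hdisj.eq_bot_of_le (LinearMap.le_ker_iff_map.2 h))

theorem map_eq_of_disjoint_ker (hρV : IsGradedRep G M ta VS ρV) (hα : IsEquivariant G ρV ρW α)
    (hs : s ∈ M) (hgrade : ∀ ξ ∈ VS s, α ξ ∈ WS s)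
    (hirr : IsIrreducibleAt G ta WS ρW s) (hne : VS s ≠ ⊥) (hdisj : Disjoint (VS s) (ker α)) :
    (VS s).map α = WS s :=
  (hirr _ (Submodule.map_le_iff_le_comap.2 hgrade) (isStabInvariant_map hρV hα hs)).resolve_left
    (map_ne_bot_of_disjoint_ker hdisj hne)

theorem le_ker_of_le_ker_base (hρV : IsGradedRep G M ta VS ρV) (hα : IsEquivariant G ρV ρW α)
    (hA : IsRightActionOn G M ta) (hs : s ∈ M) (hsuppV : ∀ t ∉ taOrbit G ta s, VS t = ⊥)
    (h : VS s ≤ ker α) (t : X) : VS t ≤ ker α := by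
  by_cases ht : t ∈ taOrbit G ta s
  · obtain ⟨u, hu, rfl⟩ := ht
    rw [LinearMap.le_ker_iff_map, map_ta_eq_map_map hρV hα hA hs hu,
      LinearMap.le_ker_iff_map.1 h, Submodule.map_bot]
  · simp [hsuppV t ht]

theorem disjoint_ker_of_disjoint_ker_base (hρV : IsGradedRep G M ta VS ρV)
    (hα : IsEquivariant G ρV ρW α) (hA : IsRightActionOn G M ta) (hs : s ∈ M)
    (hsuppV : ∀ t ∉ taOrbit G ta s, VS t = ⊥) (h : Disjoint (VS s) (ker α)) (t : X) :
    Disjoint (VS t) (ker α) := by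
  by_cases ht : t ∈ taOrbit G ta s
  · obtain ⟨u, hu, rfl⟩ := ht
    refine Submodule.disjoint_def.2 fun ξ hξ hξα => ?_
    have hα' : α (ρV u⁻¹ ξ) = 0 := by
      rw [← LinearMap.comp_apply, hα _ (inv_mem hu), LinearMap.comp_apply,
        LinearMap.mem_ker.1 hξα, map_zero]
    rw [← hρV.apply_inv_apply hu ξ,
      Submodule.disjoint_def.1 h _ (hρV.mem_inv hA hs hu hξ) hα', map_zero]
  · simp [hsuppV t ht]

theorem map_eq_of_map_eq_base (hρV : IsGradedRep G M ta VS ρV) (hρW : IsGradedRep G M ta WS ρW)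
    (hα : IsEquivariant G ρV ρW α) (hA : IsRightActionOn G M ta) (hs : s ∈ M)
    (hsuppV : ∀ t ∉ taOrbit G ta s, VS t = ⊥)
    (hsuppW : ∀ t ∉ taOrbit G ta s, WS t = ⊥) (h : (VS s).map α = WS s) (t : X) :
    (VS t).map α = WS t := by
  by_cases ht : t ∈ taOrbit G ta s
  · obtain ⟨u, hu, rfl⟩ := ht
    rw [map_ta_eq_map_map hρV hα hA hs hu, h, hρW.map_eq hA hs hu]
  · rw [hsuppV t ht, hsuppW t ht, Submodule.map_bot]

end GradedRep

theorem stmt16_general {X : Type*} [Group X] [DecidableEq X]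
    (G : Subgroup X) (M : Set X)
    (huniq : ∀ u v s t : X, u ∈ G → v ∈ G → s ∈ M → t ∈ M → u * s = v * t → u = v ∧ s = t)
    (tr ta : X → X → X)
    (htr : ∀ s u : X, s ∈ M → u ∈ G → tr s u ∈ G)
    (hta : ∀ s u : X, s ∈ M → u ∈ G → ta s u ∈ M)
    (hfac : ∀ s u : X, s ∈ M → u ∈ G → s * u = tr s u * ta s u)
    {V W : Type*} [AddCommGroup V] [Module ℂ V]
    [AddCommGroup W] [Module ℂ W]
    (VS : X → Submodule ℂ V) (hdV : DirectSum.IsInternal VS)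
    (WS : X → Submodule ℂ W) (hdW : DirectSum.IsInternal WS)
    (ρV : X → V →ₗ[ℂ] V) (hρV1 : ρV 1 = LinearMap.id)
    (hρVm : ∀ u v : X, u ∈ G → v ∈ G → ρV (u * v) = (ρV v).comp (ρV u))
    (hcompatV : ∀ s u : X, s ∈ M → u ∈ G → ∀ ξ ∈ VS s, ρV u ξ ∈ VS (ta s u))
    (ρW : X → W →ₗ[ℂ] W) (hρW1 : ρW 1 = LinearMap.id)
    (hρWm : ∀ u v : X, u ∈ G → v ∈ G → ρW (u * v) = (ρW v).comp (ρW u))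
    (hcompatW : ∀ s u : X, s ∈ M → u ∈ G → ∀ η ∈ WS s, ρW u η ∈ WS (ta s u))
    -- `V` is indecomposable, supported on the orbit of `sV`:
    (sV : X) (hsV : sV ∈ M)
    (hsuppV : ∀ t : X, (¬ ∃ u ∈ G, ta sV u = t) → VS t = ⊥)
    (hneV : VS sV ≠ ⊥)
    (hirrV : ∀ U : Submodule ℂ V, U ≤ VS sV →
      (∀ w : X, w ∈ G → ta sV w = sV → ∀ ξ ∈ U, ρV w ξ ∈ U) → U = ⊥ ∨ U = VS sV)
    -- `W` is indecomposable, supported on the orbit of `sW`: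
    (sW : X) (hsW : sW ∈ M)
    (hsuppW : ∀ t : X, (¬ ∃ u ∈ G, ta sW u = t) → WS t = ⊥)
    (hirrW : ∀ U : Submodule ℂ W, U ≤ WS sW →
      (∀ w : X, w ∈ G → ta sW w = sW → ∀ η ∈ U, ρW w η ∈ U) → U = ⊥ ∨ U = WS sW)
    -- `α` is a morphism: grade-preserving and `G`-equivariant
    (α : V →ₗ[ℂ] W)
    (hgrade : ∀ t : X, ∀ ξ ∈ VS t, α ξ ∈ WS t)
    (hequiv : ∀ u : X, u ∈ G → α.comp (ρV u) = (ρW u).comp α) :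
    α = 0 ∨
      ({t : X | ∃ u ∈ G, ta sV u = t} = {t : X | ∃ u ∈ G, ta sW u = t} ∧
        ∃ c : ℂ, c ≠ 0 ∧ ∃ e : V ≃ₗ[ℂ] W, α = c • (e : V →ₗ[ℂ] W)) := by
  have hA := isRightActionOn_of_factorization huniq htr hta hfac
  have hρV : IsGradedRep G M ta VS ρV := ⟨hρV1, hρVm, hcompatV⟩
  have hρW : IsGradedRep G M ta WS ρW := ⟨hρW1, hρWm, hcompatW⟩
  rcases disjoint_ker_or_le_ker hρV hequiv hsV hirrV with hdisj | hker
  · right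
    have hWne : WS sV ≠ ⊥ := ne_bot_of_le_ne_bot (map_ne_bot_of_disjoint_ker hdisj hneV)
      (Submodule.map_le_iff_le_comap.2 (hgrade sV))
    obtain ⟨u, hu, rfl⟩ : sV ∈ taOrbit G ta sW := not_not.1 (mt (hsuppW sV) hWne)
    have horbit : taOrbit G ta (ta sW u) = taOrbit G ta sW := hA.taOrbit_ta hsW hu
    have hmap := map_eq_of_disjoint_ker hρV hequiv hsV (hgrade _)
      (hρW.isIrreducibleAt_ta hA hsW hu hirrW) hneV hdisj
    have hbij := hdV.bijective_of_disjoint_ker hdW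
      (disjoint_ker_of_disjoint_ker_base hρV hequiv hA hsV hsuppV hdisj)
      (map_eq_of_map_eq_base hρV hρW hequiv hA hsV hsuppV (horbit ▸ hsuppW) hmap)
    exact ⟨horbit, 1, one_ne_zero, LinearEquiv.ofBijective α hbij, (one_smul ℂ _).symm⟩
  · exact Or.inl <| hdV.eq_zero_of_forall_le_ker <|
      le_ker_of_le_ker_base hρV hequiv hA hsV hsuppV hker

/-- Schur's lemma in the category `𝒞`: a grade-preserving `G`-equivariant
linear map `α : V → W` between indecomposable objects (each supported on a
single `⊳`-orbit, with irreducible stabilizer representation in each graded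
component at the base point) is either zero, or the orbits coincide and `α`
is a nonzero scalar multiple of an isomorphism; in particular for `V = W` it
is a scalar multiple of the identity. -/
theorem stmt16 {X : Type*} [Group X] [Fintype X] [DecidableEq X]
    (G : Subgroup X) (M : Set X)
    (hM1 : (1 : X) ∈ M)
    (huniq : ∀ u v s t : X, u ∈ G → v ∈ G → s ∈ M → t ∈ M → u * s = v * t → u = v ∧ s = t)
    (tr ta : X → X → X)
    (htr : ∀ s u : X, s ∈ M → u ∈ G → tr s u ∈ G)
    (hta : ∀ s u : X, s ∈ M → u ∈ G → ta s u ∈ M)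
    (hfac : ∀ s u : X, s ∈ M → u ∈ G → s * u = tr s u * ta s u)
    {V W : Type*} [AddCommGroup V] [Module ℂ V] [FiniteDimensional ℂ V]
    [AddCommGroup W] [Module ℂ W] [FiniteDimensional ℂ W]
    (VS : X → Submodule ℂ V) (hdV : DirectSum.IsInternal VS)
    (WS : X → Submodule ℂ W) (hdW : DirectSum.IsInternal WS)
    (ρV : X → V →ₗ[ℂ] V) (hρV1 : ρV 1 = LinearMap.id)
    (hρVm : ∀ u v : X, u ∈ G → v ∈ G → ρV (u * v) = (ρV v).comp (ρV u))
    (hcompatV : ∀ s u : X, s ∈ M → u ∈ G → ∀ ξ ∈ VS s, ρV u ξ ∈ VS (ta s u))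
    (ρW : X → W →ₗ[ℂ] W) (hρW1 : ρW 1 = LinearMap.id)
    (hρWm : ∀ u v : X, u ∈ G → v ∈ G → ρW (u * v) = (ρW v).comp (ρW u))
    (hcompatW : ∀ s u : X, s ∈ M → u ∈ G → ∀ η ∈ WS s, ρW u η ∈ WS (ta s u))
    -- `V` is indecomposable, supported on the orbit of `sV`:
    (sV : X) (hsV : sV ∈ M)
    (hsuppV : ∀ t : X, (¬ ∃ u ∈ G, ta sV u = t) → VS t = ⊥)
    (hneV : VS sV ≠ ⊥)
    (hirrV : ∀ U : Submodule ℂ V, U ≤ VS sV →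
      (∀ w : X, w ∈ G → ta sV w = sV → ∀ ξ ∈ U, ρV w ξ ∈ U) → U = ⊥ ∨ U = VS sV)
    -- `W` is indecomposable, supported on the orbit of `sW`:
    (sW : X) (hsW : sW ∈ M)
    (hsuppW : ∀ t : X, (¬ ∃ u ∈ G, ta sW u = t) → WS t = ⊥)
    (hneW : WS sW ≠ ⊥)
    (hirrW : ∀ U : Submodule ℂ W, U ≤ WS sW →
      (∀ w : X, w ∈ G → ta sW w = sW → ∀ η ∈ U, ρW w η ∈ U) → U = ⊥ ∨ U = WS sW)
    -- `α` is a morphism: grade-preserving and `G`-equivariant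
    (α : V →ₗ[ℂ] W)
    (hgrade : ∀ t : X, ∀ ξ ∈ VS t, α ξ ∈ WS t)
    (hequiv : ∀ u : X, u ∈ G → α.comp (ρV u) = (ρW u).comp α) :
    α = 0 ∨
      ({t : X | ∃ u ∈ G, ta sV u = t} = {t : X | ∃ u ∈ G, ta sW u = t} ∧
        ∃ c : ℂ, c ≠ 0 ∧ ∃ e : V ≃ₗ[ℂ] W, α = c • (e : V →ₗ[ℂ] W)) :=
  stmt16_general G M huniq tr ta htr hta hfac VS hdV WS hdW ρV hρV1 hρVm hcompatV ρW hρW1 hρWm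
    hcompatW sV hsV hsuppV hneV hirrV sW hsW hsuppW hirrW α hgrade hequiv
end
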